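/- In the extremal setup (r ≥ 1, n ≥ 8(r²+r+4), G* extremal, u* a vertex of maximum Perron entry, A = N(u*)), the neighbourhood of u* satisfies |A| ≥ ⌈n/2⌉. -/

import Mathlib

open Finset Matrix

noncomputable section

/-- The book graph `B_{r+1}`: `r+1` triangles sharing a common edge, i.e. the join of an
edge (vertices `0, 1`) with an independent set of `r+1` vertices. -/
def bookGraph (r : ℕ) : SimpleGraph (Fin (r + 3)) :=
  SimpleGraph.fromRel (fun u _ => u.val < 2)

/-- `Free H G` means `G` contains no subgraph isomorphic to `H`, i.e. there is no injective
graph homomorphism from `H` to `G`. -/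
def Free {W V : Type*} (H : SimpleGraph W) (G : SimpleGraph V) : Prop :=
  ¬ ∃ f : H →g G, Function.Injective f

/-- The adjacency matrix of `G` over `ℝ` (with classical decidability of adjacency). -/
def adjMat {V : Type*} (G : SimpleGraph V) : Matrix V V ℝ :=
  letI : DecidableRel G.Adj := Classical.decRel _
  G.adjMatrix ℝ

/-- The spectral radius of a finite simple graph: the largest real eigenvalue of its
adjacency matrix. -/
def specRad {V : Type*} [Fintype V] (G : SimpleGraph V) : ℝ :=
  sSup {t : ℝ | ∃ v : V → ℝ, v ≠ 0 ∧ adjMat G *ᵥ v = t • v}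

/-- `Kstrr s t r` is the graph `K_{s,t}^{r,r}`: the complete bipartite graph with parts
`Fin s` and `Fin t`, together with one extra vertex (`none`) joined to exactly the first
`r` vertices of each part. -/
def Kstrr (s t r : ℕ) : SimpleGraph (Option (Fin s ⊕ Fin t)) :=
  SimpleGraph.fromRel (fun u v =>
    (∃ a b, u = some (Sum.inl a) ∧ v = some (Sum.inr b)) ∨
    (∃ a : Fin s, u = none ∧ v = some (Sum.inl a) ∧ a.val < r) ∨
    (∃ b : Fin t, u = none ∧ v = some (Sum.inr b) ∧ b.val < r))

/-- `degIn G S v` is the number of neighbours of `v` in the set `S`. -/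
def degIn {V : Type*} (G : SimpleGraph V) (S : Finset V) (v : V) : ℕ :=
  letI : DecidableRel G.Adj := Classical.decRel _
  (S.filter fun w => G.Adj v w).card

/-- `edgesIn G S` is the number of edges of `G` with both endpoints in `S`. -/
def edgesIn {V : Type*} [Fintype V] (G : SimpleGraph V) (S : Finset V) : ℕ :=
  letI := Classical.decEq V
  letI : DecidableRel G.Adj := Classical.decRel _
  letI : DecidablePred fun e : Sym2 V => ∀ v ∈ e, v ∈ S := Classical.decPred _
  (G.edgeFinset.filter fun e => ∀ v ∈ e, v ∈ S).card

/-- `edgeCount G` is the number of edges of `G`. -/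
def edgeCount {V : Type*} [Fintype V] (G : SimpleGraph V) : ℕ :=
  letI := Classical.decEq V
  letI : DecidableRel G.Adj := Classical.decRel _
  G.edgeFinset.card

/-- `edgesBetween G S T` is the number of pairs `(s, t) ∈ S × T` with `s` adjacent to `t`;
for disjoint `S` and `T` this is the number of edges between `S` and `T`. -/
def edgesBetween {V : Type*} (G : SimpleGraph V) (S T : Finset V) : ℕ :=
  letI : DecidableRel G.Adj := Classical.decRel _
  ((S ×ˢ T).filter fun p => G.Adj p.1 p.2).card

/-- `maxDeg G` is the maximum degree of `G`. -/
def maxDeg {V : Type*} [Fintype V] (G : SimpleGraph V) : ℕ :=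
  letI : DecidableRel G.Adj := Classical.decRel _
  G.maxDegree

/-- `matchingNumberOn G S` is the matching number of the subgraph of `G` induced by `S`:
the largest cardinality of a set of pairwise disjoint edges of `G` lying inside `S`. -/
def matchingNumberOn {V : Type*} (G : SimpleGraph V) (S : Finset V) : ℕ :=
  sSup {k | ∃ M : Finset (Sym2 V), ↑M ⊆ G.edgeSet ∧ (∀ e ∈ M, ∀ v ∈ e, v ∈ S) ∧
    M.card = k ∧ (M : Set (Sym2 V)).Pairwise fun e f => ∀ v, v ∈ e → v ∉ f}

/-- `matchingNumber G` is the matching number of `G`. -/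
def matchingNumber {V : Type*} [Fintype V] (G : SimpleGraph V) : ℕ :=
  matchingNumberOn G Finset.univ

end


/-! ### Auxiliary lemmas for the proof -/

section AuxLemmas

open scoped Classical

lemma adjMat_apply' {V : Type*} (G : SimpleGraph V) [DecidableRel G.Adj] (u v : V) :
    adjMat G u v = if G.Adj u v then 1 else 0 := by
  unfold adjMat
  simp [SimpleGraph.adjMatrix_apply]

lemma adjMat_symm' {V : Type*} (G : SimpleGraph V) (u v : V) :
    adjMat G u v = adjMat G v u := by
  classical
  rw [adjMat_apply', adjMat_apply']
  simp [SimpleGraph.adj_comm]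

lemma adjMat_abs_le_one' {V : Type*} (G : SimpleGraph V) (u v : V) :
    |adjMat G u v| ≤ 1 := by
  classical
  rw [adjMat_apply']
  split <;> norm_num

lemma adjMat_isHermitian' {V : Type*} [Fintype V] (G : SimpleGraph V) :
    (adjMat G).IsHermitian := by
  unfold Matrix.IsHermitian
  ext i j
  simp [Matrix.conjTranspose_apply, adjMat_symm' G i j]

lemma adjMat_mulVec_filter {V : Type*} [Fintype V] (G : SimpleGraph V) [DecidableRel G.Adj]
    (y : V → ℝ) (u : V) :
    (adjMat G *ᵥ y) u = ∑ v ∈ Finset.univ.filter (fun v => G.Adj u v), y v := by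
  rw [Finset.sum_filter]
  simp [Matrix.mulVec, dotProduct, adjMat_apply', ite_mul]

open scoped RealInnerProductSpace in
lemma rayleigh_le_specRad {n : ℕ} (hn : 0 < n) (G : SimpleGraph (Fin n)) (y : Fin n → ℝ) :
    ∑ u, y u * (adjMat G *ᵥ y) u ≤ specRad G * ∑ u, y u * y u := by
  classical
  have hM : (adjMat G).IsHermitian := adjMat_isHermitian' G
  set B := hM.eigenvectorBasis with hB
  obtain ⟨i0, -, hi0⟩ := Finset.exists_max_image Finset.univ hM.eigenvalues ⟨⟨0, hn⟩, Finset.mem_univ _⟩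
  have hmem : hM.eigenvalues i0 ∈ {t : ℝ | ∃ v : Fin n → ℝ, v ≠ 0 ∧ adjMat G *ᵥ v = t • v} := by
    refine ⟨⇑(B i0), ?_, hM.mulVec_eigenvectorBasis i0⟩
    exact fun h => (B.orthonormal.ne_zero i0) (by ext k; exact congrFun h k)
  have hbdd : BddAbove {t : ℝ | ∃ v : Fin n → ℝ, v ≠ 0 ∧ adjMat G *ᵥ v = t • v} := by
    refine ⟨n, fun t ht => ?_⟩
    obtain ⟨v, hv0, hv⟩ := ht
    obtain ⟨i, -, hi⟩ := Finset.exists_max_image Finset.univ (fun i => |v i|) ⟨⟨0, hn⟩, Finset.mem_univ _⟩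
    have hvi : 0 < |v i| := by
      obtain ⟨j, hj⟩ := Function.ne_iff.mp hv0
      exact lt_of_lt_of_le (abs_pos.mpr hj) (hi j (Finset.mem_univ _))
    have h1 : |t| * |v i| ≤ n * |v i| := by
      have hcf := congrFun hv i
      simp only [Matrix.mulVec, dotProduct, Pi.smul_apply, smul_eq_mul] at hcf
      rw [← abs_mul, ← hcf]
      calc |∑ j, adjMat G i j * v j| ≤ ∑ j, |adjMat G i j * v j| := Finset.abs_sum_le_sum_abs _ _
        _ ≤ ∑ _j : Fin n, |v i| := by
            refine Finset.sum_le_sum fun j _ => ?_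
            rw [abs_mul]
            calc |adjMat G i j| * |v j| ≤ 1 * |v i| :=
              mul_le_mul (adjMat_abs_le_one' G i j) (hi j (Finset.mem_univ _)) (abs_nonneg _) zero_le_one
              _ = |v i| := one_mul _
        _ = n * |v i| := by simp [mul_comm]
    have := le_of_mul_le_mul_right h1 hvi
    exact le_trans (le_abs_self t) this
  have hle : hM.eigenvalues i0 ≤ specRad G := le_csSup hbdd hmem
  set yE : EuclideanSpace ℝ (Fin n) := (WithLp.equiv 2 (Fin n → ℝ)).symm y with hyE
  have hinner : ∀ a b : EuclideanSpace ℝ (Fin n), ⟪a, b⟫ = ∑ u, a u * b u := by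
    intro a b
    simp [PiLp.inner_apply, RCLike.inner_apply, mul_comm]
  have hsymmv : ∀ a b : Fin n → ℝ, ∑ u, a u * (adjMat G *ᵥ b) u = ∑ u, (adjMat G *ᵥ a) u * b u := by
    intro a b
    simp only [Matrix.mulVec, dotProduct, Finset.mul_sum, Finset.sum_mul]
    rw [Finset.sum_comm]
    refine Finset.sum_congr rfl fun i _ => Finset.sum_congr rfl fun j _ => ?_
    rw [adjMat_symm' G j i]; ring
  have key : ∀ z : EuclideanSpace ℝ (Fin n),
      ⟪z, (WithLp.toLp 2 (adjMat G *ᵥ z))⟫ ≤ hM.eigenvalues i0 * ⟪z, z⟫ := by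
    intro z
    have h1 := B.sum_inner_mul_inner z (WithLp.toLp 2 (adjMat G *ᵥ z))
    have h2 := B.sum_inner_mul_inner z z
    rw [← h1, ← h2, Finset.mul_sum]
    refine Finset.sum_le_sum fun i _ => ?_
    have hBi : ⟪B i, (WithLp.toLp 2 (adjMat G *ᵥ z))⟫
        = hM.eigenvalues i * ⟪B i, z⟫ := by
      rw [hinner, hinner]
      calc ∑ u, (B i) u * (adjMat G *ᵥ z) u = ∑ u, (adjMat G *ᵥ ⇑(B i)) u * z u := hsymmv _ _
        _ = hM.eigenvalues i * ∑ u, (B i) u * z u := by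
            rw [hM.mulVec_eigenvectorBasis i]
            simp only [Pi.smul_apply, smul_eq_mul, Finset.mul_sum, mul_assoc]
            rfl
    rw [hBi]
    have hsq : 0 ≤ ⟪z, B i⟫ * ⟪B i, z⟫ := by
      rw [real_inner_comm z (B i)]; exact mul_self_nonneg _
    calc ⟪z, B i⟫ * (hM.eigenvalues i * ⟪B i, z⟫) = hM.eigenvalues i * (⟪z, B i⟫ * ⟪B i, z⟫) := by ring
      _ ≤ hM.eigenvalues i0 * (⟪z, B i⟫ * ⟪B i, z⟫) :=
          mul_le_mul_of_nonneg_right (hi0 i (Finset.mem_univ _)) hsq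
  have hk := key yE
  rw [hinner, hinner] at hk
  calc ∑ u, y u * (adjMat G *ᵥ y) u ≤ hM.eigenvalues i0 * ∑ u, y u * y u := hk
    _ ≤ specRad G * ∑ u, y u * y u :=
        mul_le_mul_of_nonneg_right hle (Finset.sum_nonneg fun u _ => mul_self_nonneg _)

/-- the relation defining the auxiliary graph: parts `[1,s]` and `(s, n)` completely joined,
plus vertex `0` joined to `1` and `s+1`. -/
def auxRel (s : ℕ) : ℕ → ℕ → Prop := fun i j =>
  (1 ≤ i ∧ i ≤ s ∧ s < j) ∨ (i = 0 ∧ (j = 1 ∨ j = s + 1))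

def auxGraph (n s : ℕ) : SimpleGraph (Fin n) :=
  SimpleGraph.fromRel (fun u v => auxRel s u.val v.val)

lemma auxGraph_adj {n s : ℕ} (u v : Fin n) :
    (auxGraph n s).Adj u v ↔ u.val ≠ v.val ∧ (auxRel s u.val v.val ∨ auxRel s v.val u.val) := by
  rw [auxGraph, SimpleGraph.fromRel_adj]
  constructor
  · rintro ⟨h1, h2⟩; exact ⟨fun h => h1 (Fin.ext h), h2⟩
  · rintro ⟨h1, h2⟩; exact ⟨fun h => h1 (congrArg Fin.val h), h2⟩

lemma aux_common_unique {n s : ℕ} (hs : 1 ≤ s) (a b c d : Fin n)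
    (hab : (auxGraph n s).Adj a b) (hac : (auxGraph n s).Adj a c) (hbc : (auxGraph n s).Adj b c)
    (had : (auxGraph n s).Adj a d) (hbd : (auxGraph n s).Adj b d) : c = d := by
  rw [auxGraph_adj] at hab hac hbc had hbd
  unfold auxRel at hab hac hbc had hbd
  apply Fin.ext
  omega

lemma aux_free {n s r : ℕ} (hr : 1 ≤ r) (hs : 1 ≤ s) : Free (bookGraph r) (auxGraph n s) := by
  rintro ⟨f, hf⟩
  have hbadj : ∀ i j : Fin (r + 3), i ≠ j → i.val < 2 → (bookGraph r).Adj i j := by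
    intro i j h1 h2
    rw [bookGraph, SimpleGraph.fromRel_adj]
    exact ⟨h1, Or.inl h2⟩
  have h2 : (2 : ℕ) < r + 3 := by omega
  have h3 : (3 : ℕ) < r + 3 := by omega
  set i0 : Fin (r + 3) := ⟨0, by omega⟩
  set i1 : Fin (r + 3) := ⟨1, by omega⟩
  set i2 : Fin (r + 3) := ⟨2, h2⟩
  set i3 : Fin (r + 3) := ⟨3, h3⟩
  have hab := f.map_adj (hbadj i0 i1 (by simp [i0, i1, Fin.ext_iff]) (by simp [i0]))
  have hac := f.map_adj (hbadj i0 i2 (by simp [i0, i2, Fin.ext_iff]) (by simp [i0]))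
  have hbc := f.map_adj (hbadj i1 i2 (by simp [i1, i2, Fin.ext_iff]) (by simp [i1]))
  have had := f.map_adj (hbadj i0 i3 (by simp [i0, i3, Fin.ext_iff]) (by simp [i0]))
  have hbd := f.map_adj (hbadj i1 i3 (by simp [i1, i3, Fin.ext_iff]) (by simp [i1]))
  have : f i2 = f i3 := aux_common_unique hs _ _ _ _ hab hac hbc had hbd
  have : i2 = i3 := hf this
  simp [i2, i3, Fin.ext_iff] at this

lemma aux_nonbip {n s : ℕ} (hs : 1 ≤ s) (hn : s + 2 ≤ n) : ¬ (auxGraph n s).Colorable 2 := by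
  rintro ⟨C⟩
  set v0 : Fin n := ⟨0, by omega⟩
  set v1 : Fin n := ⟨1, by omega⟩
  set v2 : Fin n := ⟨s + 1, by omega⟩
  have h01 : (auxGraph n s).Adj v0 v1 := by
    rw [auxGraph_adj]; unfold auxRel; simp [v0, v1] <;> omega
  have h02 : (auxGraph n s).Adj v0 v2 := by
    rw [auxGraph_adj]; unfold auxRel; simp [v0, v2] <;> omega
  have h12 : (auxGraph n s).Adj v1 v2 := by
    rw [auxGraph_adj]; unfold auxRel; simp [v1, v2] <;> omega
  have e01 := C.valid h01
  have e02 := C.valid h02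
  have e12 := C.valid h12
  have q0 : (C v0).val < 2 := (C v0).isLt
  have q1 : (C v1).val < 2 := (C v1).isLt
  have q2 : (C v2).val < 2 := (C v2).isLt
  have n01 : (C v0).val ≠ (C v1).val := fun h => e01 (Fin.ext h)
  have n02 : (C v0).val ≠ (C v2).val := fun h => e02 (Fin.ext h)
  have n12 : (C v1).val ≠ (C v2).val := fun h => e12 (Fin.ext h)
  omega

/-- the test vector: value `1` at vertex `0`, value `n` elsewhere. -/
def yv (n : ℕ) : Fin n → ℝ := fun v => if v.val = 0 then 1 else n

section comp
variable {n s t : ℕ}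

lemma card_filter_val (p : ℕ → Prop) [DecidablePred p] :
    ((Finset.univ : Finset (Fin n)).filter fun v => p v.val).card
      = ((Finset.range n).filter p).card := by
  rw [← Finset.card_image_of_injective _ Fin.val_injective]
  congr 1
  ext k
  simp only [Finset.mem_image, Finset.mem_filter, Finset.mem_univ, true_and, Finset.mem_range]
  constructor
  · rintro ⟨v, hv, rfl⟩; exact ⟨v.isLt, hv⟩
  · rintro ⟨hk, hp⟩; exact ⟨⟨k, hk⟩, hp, rfl⟩

lemma sum_Su (hnst : n = s + t + 1) (hs : 1 ≤ s) :
    ∑ v ∈ Finset.univ.filter (fun v : Fin n => s < v.val), yv n v = t * n := by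
  have hconst : ∀ v ∈ Finset.univ.filter (fun v : Fin n => s < v.val), yv n v = n := by
    intro v hv
    simp only [Finset.mem_filter] at hv
    simp only [yv, if_neg (by omega : ¬ v.val = 0)]
  rw [Finset.sum_congr rfl hconst, Finset.sum_const,
    card_filter_val (p := fun k => s < k)]
  have : (Finset.range n).filter (fun k => s < k) = Finset.Ico (s+1) n := by
    ext k; simp [Finset.mem_Ico]; omega
  rw [this, Nat.card_Ico, show n - (s+1) = t from by omega, nsmul_eq_mul]

lemma sum_Sl (hnst : n = s + t + 1) (hs : 1 ≤ s) :
    ∑ v ∈ Finset.univ.filter (fun v : Fin n => 1 ≤ v.val ∧ v.val ≤ s), yv n v = s * n := by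
  have hconst : ∀ v ∈ Finset.univ.filter (fun v : Fin n => 1 ≤ v.val ∧ v.val ≤ s),
      yv n v = n := by
    intro v hv
    simp only [Finset.mem_filter] at hv
    simp only [yv, if_neg (by omega : ¬ v.val = 0)]
  rw [Finset.sum_congr rfl hconst, Finset.sum_const,
    card_filter_val (p := fun k => 1 ≤ k ∧ k ≤ s)]
  have : (Finset.range n).filter (fun k => 1 ≤ k ∧ k ≤ s) = Finset.Ico 1 (s+1) := by
    ext k; simp [Finset.mem_Ico]; omega
  rw [this, Nat.card_Ico, show s + 1 - 1 = s from by omega, nsmul_eq_mul]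

lemma mulVec_class (hnst : n = s + t + 1) (hs : 1 ≤ s) (ht : 1 ≤ t) (u : Fin n) :
    (adjMat (auxGraph n s) *ᵥ yv n) u =
      if u.val = 0 then 2 * (n:ℝ)
      else if u.val = 1 then 1 + (t:ℝ) * n
      else if u.val ≤ s then (t:ℝ) * n
      else if u.val = s + 1 then 1 + (s:ℝ) * n
      else (s:ℝ) * n := by
  classical
  rw [adjMat_mulVec_filter]
  rcases (show u.val = 0 ∨ u.val = 1 ∨ (2 ≤ u.val ∧ u.val ≤ s) ∨ u.val = s + 1 ∨ s + 2 ≤ u.val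
    from by omega) with h | h | h | h | h
  · rw [if_pos h]
    have hf : Finset.univ.filter (fun v : Fin n => (auxGraph n s).Adj u v)
        = {(⟨1, by omega⟩ : Fin n), ⟨s+1, by omega⟩} := by
      ext w
      simp only [Finset.mem_filter, Finset.mem_univ, true_and, Finset.mem_insert,
        Finset.mem_singleton, auxGraph_adj, auxRel, Fin.ext_iff, h, true_or, or_true, true_and,
        and_true, eq_self_iff_true]
      omega
    rw [hf, Finset.sum_insert (by simp [Fin.ext_iff]; omega), Finset.sum_singleton]
    simp only [yv]
    norm_num
    ring
  · rw [if_neg (by omega), if_pos h]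
    have hf : Finset.univ.filter (fun v : Fin n => (auxGraph n s).Adj u v)
        = insert (⟨0, by omega⟩ : Fin n) (Finset.univ.filter (fun v : Fin n => s < v.val)) := by
      ext w
      simp only [Finset.mem_filter, Finset.mem_univ, true_and, Finset.mem_insert,
        auxGraph_adj, auxRel, Fin.ext_iff, h, true_or, or_true, true_and,
        and_true, eq_self_iff_true]
      omega
    rw [hf, Finset.sum_insert (by simp), sum_Su hnst hs]
    simp only [yv]
    norm_num
  · rw [if_neg (by omega), if_neg (by omega), if_pos (by omega : u.val ≤ s)]
    have hf : Finset.univ.filter (fun v : Fin n => (auxGraph n s).Adj u v)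
        = Finset.univ.filter (fun v : Fin n => s < v.val) := by
      ext w
      simp only [Finset.mem_filter, Finset.mem_univ, true_and, auxGraph_adj, auxRel]
      omega
    rw [hf, sum_Su hnst hs]
  · rw [if_neg (by omega), if_neg (by omega), if_neg (by omega), if_pos h]
    have hf : Finset.univ.filter (fun v : Fin n => (auxGraph n s).Adj u v)
        = insert (⟨0, by omega⟩ : Fin n)
            (Finset.univ.filter (fun v : Fin n => 1 ≤ v.val ∧ v.val ≤ s)) := by
      ext w
      simp only [Finset.mem_filter, Finset.mem_univ, true_and, Finset.mem_insert,
        auxGraph_adj, auxRel, Fin.ext_iff, h, true_or, or_true, true_and,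
        and_true, eq_self_iff_true]
      omega
    rw [hf, Finset.sum_insert (by norm_num), sum_Sl hnst hs]
    simp only [yv]
    norm_num
  · rw [if_neg (by omega), if_neg (by omega), if_neg (by omega), if_neg (by omega)]
    have hf : Finset.univ.filter (fun v : Fin n => (auxGraph n s).Adj u v)
        = Finset.univ.filter (fun v : Fin n => 1 ≤ v.val ∧ v.val ≤ s) := by
      ext w
      simp only [Finset.mem_filter, Finset.mem_univ, true_and, auxGraph_adj, auxRel]
      omega
    rw [hf, sum_Sl hnst hs]

def Wq (n s t : ℕ) : ℕ → ℝ := fun k =>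
  (if k = 0 then (1:ℝ) else n) *
    (if k = 0 then 2 * (n:ℝ) else if k = 1 then 1 + (t:ℝ) * n
      else if k ≤ s then (t:ℝ) * n else if k = s + 1 then 1 + (s:ℝ) * n else (s:ℝ) * n)

lemma aux_Q (hnst : n = s + t + 1) (hs : 1 ≤ s) (ht : 1 ≤ t) :
    ∑ u, yv n u * (adjMat (auxGraph n s) *ᵥ yv n) u
      = 4 * n + 2 * s * t * (n:ℝ)^2 := by
  have hW : ∀ u : Fin n, yv n u * (adjMat (auxGraph n s) *ᵥ yv n) u = Wq n s t u.val := by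
    intro u
    rw [mulVec_class hnst hs ht]
    rfl
  rw [Finset.sum_congr rfl (fun u _ => hW u), Fin.sum_univ_eq_sum_range (Wq n s t) n]
  rw [Finset.range_eq_Ico,
    ← Finset.sum_Ico_consecutive (Wq n s t) (by omega : (0:ℕ) ≤ 2) (by omega : 2 ≤ n),
    ← Finset.sum_Ico_consecutive (Wq n s t) (by omega : (2:ℕ) ≤ s + 1) (by omega : s + 1 ≤ n),
    ← Finset.sum_Ico_consecutive (Wq n s t) (by omega : s + 1 ≤ s + 2) (by omega : s + 2 ≤ n)]
  have e1 : ∑ k ∈ Finset.Ico 0 2, Wq n s t k = 2 * n + (n:ℝ) * (1 + (t:ℝ) * n) := by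
    rw [show Finset.Ico 0 2 = {0, 1} from rfl]
    rw [Finset.sum_insert (by simp), Finset.sum_singleton]
    have h0 : Wq n s t 0 = 2 * (n:ℝ) := by simp [Wq]
    have h1 : Wq n s t 1 = (n:ℝ) * (1 + (t:ℝ) * n) := by
      unfold Wq
      rw [if_neg (by omega), if_neg (by omega), if_pos rfl]
    rw [h0, h1]
  have e2 : ∑ k ∈ Finset.Ico 2 (s+1), Wq n s t k = ((s:ℝ) - 1) * ((n:ℝ) * ((t:ℝ) * n)) := by
    have hc : ∀ k ∈ Finset.Ico 2 (s+1), Wq n s t k = (n:ℝ) * ((t:ℝ) * n) := by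
      intro k hk
      rw [Finset.mem_Ico] at hk
      unfold Wq
      rw [if_neg (by omega), if_neg (by omega), if_neg (by omega), if_pos (by omega)]
    rw [Finset.sum_congr rfl hc, Finset.sum_const, Nat.card_Ico,
      show s + 1 - 2 = s - 1 from by omega, nsmul_eq_mul, Nat.cast_sub hs]
    norm_num
  have e3 : ∑ k ∈ Finset.Ico (s+1) (s+2), Wq n s t k = (n:ℝ) * (1 + (s:ℝ) * n) := by
    rw [Nat.Ico_succ_singleton, Finset.sum_singleton]
    unfold Wq
    rw [if_neg (by omega), if_neg (by omega), if_neg (by omega), if_neg (by omega), if_pos rfl]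
  have e4 : ∑ k ∈ Finset.Ico (s+2) n, Wq n s t k = ((t:ℝ) - 1) * ((n:ℝ) * ((s:ℝ) * n)) := by
    have hc : ∀ k ∈ Finset.Ico (s+2) n, Wq n s t k = (n:ℝ) * ((s:ℝ) * n) := by
      intro k hk
      rw [Finset.mem_Ico] at hk
      unfold Wq
      rw [if_neg (by omega), if_neg (by omega), if_neg (by omega), if_neg (by omega),
        if_neg (by omega)]
    rw [Finset.sum_congr rfl hc, Finset.sum_const, Nat.card_Ico,
      show n - (s + 2) = t - 1 from by omega, nsmul_eq_mul, Nat.cast_sub ht]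
    norm_num
  rw [e1, e2, e3, e4]
  ring

def Wn (n : ℕ) : ℕ → ℝ := fun k => (if k = 0 then (1:ℝ) else n) * (if k = 0 then (1:ℝ) else n)

lemma aux_N (hn1 : 1 ≤ n) :
    ∑ u, yv n u * yv n u = 1 + ((n:ℝ) - 1) * (n:ℝ)^2 := by
  have hW : ∀ u : Fin n, yv n u * yv n u = Wn n u.val := fun u => rfl
  rw [Finset.sum_congr rfl (fun u _ => hW u), Fin.sum_univ_eq_sum_range (Wn n) n]
  rw [Finset.range_eq_Ico,
    ← Finset.sum_Ico_consecutive (Wn n) (by omega : (0:ℕ) ≤ 1) (by omega : 1 ≤ n)]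
  have e1 : ∑ k ∈ Finset.Ico 0 1, Wn n k = 1 := by
    rw [show Finset.Ico 0 1 = {0} from rfl, Finset.sum_singleton]
    simp [Wn]
  have e2 : ∑ k ∈ Finset.Ico 1 n, Wn n k = ((n:ℝ) - 1) * (n:ℝ)^2 := by
    have hc : ∀ k ∈ Finset.Ico 1 n, Wn n k = (n:ℝ)^2 := by
      intro k hk
      rw [Finset.mem_Ico] at hk
      unfold Wn
      rw [if_neg (by omega)]
      ring
    rw [Finset.sum_congr rfl hc, Finset.sum_const, Nat.card_Ico, nsmul_eq_mul,
      Nat.cast_sub hn1]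
    norm_num
  rw [e1, e2]

end comp

lemma aux_numeric (n s t τ : ℕ) (hn : 4 ≤ n) (hs : 2 * s ≤ n ∧ n ≤ 2 * s + 1)
    (ht : s + t + 1 = n) (hτ : 2 * τ + 1 ≤ n ∧ n ≤ 2 * τ + 2) :
    τ * (1 + (n - 1) * n ^ 2) < 4 * n + 2 * s * t * n ^ 2 := by
  rcases (show n = 2 * s ∨ n = 2 * s + 1 from by omega) with h | h
  · have h1 : t = τ := by omega
    have h2 : s = τ + 1 := by omega
    rw [show n - 1 = 2 * τ + 1 from by omega, show n = 2 * τ + 2 from by omega, h1, h2]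
    nlinarith [sq_nonneg τ, τ.zero_le]
  · have h1 : t = s := by omega
    have h2 : τ = s := by omega
    rw [show n - 1 = 2 * s from by omega, show n = 2 * s + 1 from by omega, h1, h2]
    nlinarith [sq_nonneg s, s.zero_le]

end AuxLemmas

/-- In the extremal setup, `|A| ≥ ⌈n/2⌉`. -/
theorem card_A_lower (r n : ℕ) (hr : 1 ≤ r) (hn : 8 * (r ^ 2 + r + 4) ≤ n)
    (G : SimpleGraph (Fin n)) (hconn : G.Connected) (hnonbip : ¬ G.Colorable 2)
    (hfree : Free (bookGraph r) G)
    (hmax : ∀ H : SimpleGraph (Fin n), ¬ H.Colorable 2 → Free (bookGraph r) H →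
      specRad H ≤ specRad G)
    (x : Fin n → ℝ) (hxpos : ∀ v, 0 < x v) (hxunit : ∑ v, x v ^ 2 = 1)
    (heig : adjMat G *ᵥ x = specRad G • x)
    (u : Fin n) (hu : ∀ v, x v ≤ x u)
    (A B : Finset (Fin n)) (hA : ∀ v, v ∈ A ↔ G.Adj u v)
    (hB : ∀ v, v ∈ B ↔ v ≠ u ∧ v ∉ A) :
    (n + 1) / 2 ≤ A.card := by
  classical
  set s := n / 2 with hsdef
  set t := n - 1 - s with htdef
  have hr2 : 1 ≤ r ^ 2 := Nat.one_le_pow _ _ hr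
  have hn48 : 48 ≤ n := by omega
  have hns : n = s + t + 1 := by omega
  have hs1 : 1 ≤ s := by omega
  have ht1 : 1 ≤ t := by omega
  -- spectral radius is at most the degree of the max-Perron vertex
  have hxu : 0 < x u := hxpos u
  have hρA : specRad G ≤ (A.card : ℝ) := by
    have h1 : (adjMat G *ᵥ x) u = specRad G * x u := by
      rw [heig]; simp
    have h3 : Finset.univ.filter (fun v => G.Adj u v) = A := by
      ext v; simp [hA v]
    have h2 : (adjMat G *ᵥ x) u = ∑ v ∈ A, x v := by
      rw [adjMat_mulVec_filter, h3]
    have h4 : ∑ v ∈ A, x v ≤ (A.card : ℝ) * x u := by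
      calc ∑ v ∈ A, x v ≤ ∑ _v ∈ A, x u := Finset.sum_le_sum (fun v _ => hu v)
        _ = (A.card : ℝ) * x u := by rw [Finset.sum_const, nsmul_eq_mul]
    have h5 : specRad G * x u ≤ (A.card : ℝ) * x u := by
      rw [← h1, h2]; exact h4
    exact le_of_mul_le_mul_right h5 hxu
  -- the auxiliary graph
  have hHfree : Free (bookGraph r) (auxGraph n s) := aux_free hr hs1
  have hHnb : ¬ (auxGraph n s).Colorable 2 := aux_nonbip hs1 (by omega)
  have hHG : specRad (auxGraph n s) ≤ specRad G := hmax _ hHnb hHfree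
  have hray := rayleigh_le_specRad (by omega : 0 < n) (auxGraph n s) (yv n)
  rw [aux_Q hns hs1 ht1, aux_N (by omega : 1 ≤ n)] at hray
  set τ := (n - 1) / 2 with hτdef
  have hnat : τ * (1 + (n - 1) * n ^ 2) < 4 * n + 2 * s * t * n ^ 2 :=
    aux_numeric n s t τ (by omega) ⟨by omega, by omega⟩ (by omega) ⟨by omega, by omega⟩
  have hcast : ((n - 1 : ℕ) : ℝ) = (n : ℝ) - 1 := by
    rw [Nat.cast_sub (by omega : 1 ≤ n)]; norm_num
  have hnum : (τ : ℝ) * (1 + ((n:ℝ) - 1) * (n:ℝ) ^ 2) < 4 * n + 2 * s * t * (n:ℝ) ^ 2 := by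
    rw [← hcast]
    exact_mod_cast hnat
  have hNpos : (0:ℝ) < 1 + ((n:ℝ) - 1) * (n:ℝ) ^ 2 := by
    have h1 : (1:ℝ) ≤ (n:ℝ) := by exact_mod_cast (by omega : 1 ≤ n)
    nlinarith [sq_nonneg ((n:ℝ))]
  have hτH : (τ : ℝ) < specRad (auxGraph n s) := by
    have hlt : (τ : ℝ) * (1 + ((n:ℝ) - 1) * (n:ℝ) ^ 2)
        < specRad (auxGraph n s) * (1 + ((n:ℝ) - 1) * (n:ℝ) ^ 2) :=
      lt_of_lt_of_le hnum hray
    exact lt_of_mul_lt_mul_right hlt hNpos.le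
  have hτA : (τ : ℝ) < (A.card : ℝ) := lt_of_lt_of_le hτH (le_trans hHG hρA)
  have hfin : τ < A.card := by exact_mod_cast hτA
  omega
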